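/- Let V be a finite-dimensional vector space over the field 𝔽₂ with two elements, equipped with a nondegenerate alternating bilinear form b, and let μ : V → 𝔽₂ be a quadratic refinement of b. Then the element Σᵢ μ(eᵢ)μ(fᵢ) ∈ 𝔽₂ is independent of the choice of symplectic basis e₁, …, e_g, f₁, …, f_g of V: for any two symplectic bases {eᵢ, fᵢ} and {eᵢ′, fᵢ′} one has Σᵢ μ(eᵢ)μ(fᵢ) = Σᵢ μ(eᵢ′)μ(fᵢ′). -/

import Mathlib

/-- `e₁, …, e_g, f₁, …, f_g` is a symplectic basis for the bilinear form `b` on the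
`𝔽₂`-vector space `V`: it is a basis of `V` with `b (eᵢ) (eⱼ) = 0`, `b (fᵢ) (fⱼ) = 0` and
`b (eᵢ) (fⱼ) = δᵢⱼ`. -/
def IsSymplecticBasis {V : Type*} [AddCommGroup V] [Module (ZMod 2) V]
    (b : V →ₗ[ZMod 2] V →ₗ[ZMod 2] ZMod 2) (g : ℕ) (e f : Fin g → V) : Prop :=
  (∀ i j, b (e i) (e j) = 0) ∧ (∀ i j, b (f i) (f j) = 0) ∧
  (∀ i j, b (e i) (f j) = if i = j then 1 else 0) ∧
  ∃ B : Module.Basis (Fin g ⊕ Fin g) (ZMod 2) V,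
    (∀ i, B (Sum.inl i) = e i) ∧ (∀ i, B (Sum.inr i) = f i)


/-!
The Gauss sum `∑ v, (-1) ^ μ v` depends only on `μ`. A symplectic basis splits `V` into `g`
mutually orthogonal hyperbolic planes `⟨eᵢ, fᵢ⟩`, on which `μ` is additive, so the Gauss sum
factors into `g` sums over `𝔽₂²`, each equal to `2 · (-1) ^ (μ eᵢ · μ fᵢ)`. Hence it equals
`2 ^ g · (-1) ^ ∑ᵢ μ eᵢ · μ fᵢ`, and `g = dim V / 2` is intrinsic as well.
-/

open Module

def IsQuadraticRefinement {R M : Type*} [CommRing R] [AddCommGroup M] [Module R M]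
    (b : M →ₗ[R] M →ₗ[R] R) (μ : M → R) : Prop :=
  ∀ x y, μ (x + y) = μ x + μ y + b x y

namespace IsQuadraticRefinement

variable {R M : Type*} [CommRing R] [AddCommGroup M] [Module R M]
  {b : M →ₗ[R] M →ₗ[R] R} {μ : M → R}

theorem map_zero (hμ : IsQuadraticRefinement b μ) : μ 0 = 0 := by
  simpa using hμ 0 0

theorem map_sum_of_pairwise_orthogonal (hμ : IsQuadraticRefinement b μ) {ι : Type*}
    (s : Finset ι) (v : ι → M) (horth : (s : Set ι).Pairwise fun i j => b (v i) (v j) = 0) :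
    μ (∑ i ∈ s, v i) = ∑ i ∈ s, μ (v i) := by
  classical
  induction s using Finset.cons_induction with
  | empty => simpa using hμ.map_zero
  | cons a s ha ih =>
    rw [Finset.coe_cons, Set.pairwise_insert] at horth
    have hzero : ∀ i ∈ s, b (v a) (v i) = 0 := fun i hi =>
      (horth.2 i hi (fun h => ha (h ▸ hi))).1
    rw [Finset.sum_cons, Finset.sum_cons, hμ, map_sum, ih horth.1, Finset.sum_eq_zero hzero,
      add_zero]

theorem map_smul_zmod_two {V : Type*} [AddCommGroup V] [Module (ZMod 2) V]
    {b : V →ₗ[ZMod 2] V →ₗ[ZMod 2] ZMod 2} {μ : V → ZMod 2} (hμ : IsQuadraticRefinement b μ)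
    (c : ZMod 2) (x : V) : μ (c • x) = c * μ x := by
  obtain rfl | rfl : c = 0 ∨ c = 1 := by decide +revert
  · simpa using hμ.map_zero
  · simp

end IsQuadraticRefinement

theorem AddChar.map_sum_eq_prod {A M ι : Type*} [AddCommMonoid A] [CommMonoid M]
    (ψ : AddChar A M) (s : Finset ι) (a : ι → A) : ψ (∑ i ∈ s, a i) = ∏ i ∈ s, ψ (a i) :=
  map_prod ψ.toMonoidHom (fun i => Multiplicative.ofAdd (a i)) s

def signChar : AddChar (ZMod 2) ℤ := AddChar.zmodChar 2 (ζ := -1) (by norm_num)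

theorem signChar_injective : Function.Injective signChar := by
  unfold signChar
  decide

/-- `p.1 * a + p.2 * d + p.1 * p.2` is `μ (p.1 • e + p.2 • f)` on a hyperbolic plane `⟨e, f⟩`
with `μ e = a` and `μ f = d`. -/
theorem sum_signChar_hyperbolic (a d : ZMod 2) :
    ∑ p : ZMod 2 × ZMod 2, signChar (p.1 * a + p.2 * d + p.1 * p.2) = 2 * signChar (a * d) := by
  revert a d
  unfold signChar
  decide

namespace IsSymplecticBasis

variable {V : Type*} [AddCommGroup V] [Module (ZMod 2) V]
  {b : V →ₗ[ZMod 2] V →ₗ[ZMod 2] ZMod 2} {g : ℕ} {e f : Fin g → V}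

theorem finrank_eq (h : IsSymplecticBasis b g e f) : finrank (ZMod 2) V = g + g := by
  obtain ⟨-, -, -, B, -⟩ := h
  rw [finrank_eq_card_basis B, Fintype.card_sum, Fintype.card_fin]

theorem bijective_sum_smul (h : IsSymplecticBasis b g e f) :
    Function.Bijective fun c : Fin g → ZMod 2 × ZMod 2 => ∑ i, ((c i).1 • e i + (c i).2 • f i) := by
  obtain ⟨-, -, -, B, hBe, hBf⟩ := h
  let q : (Fin g → ZMod 2 × ZMod 2) ≃ (Fin g ⊕ Fin g → ZMod 2) :=
    (Equiv.arrowProdEquivProdArrow _ _ _).trans (Equiv.sumArrowEquivProdArrow _ _ _).symm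
  convert (q.trans B.equivFun.symm.toEquiv).bijective with c
  simp [q, Module.Basis.equivFun_symm_apply, Fintype.sum_sum_type, Finset.sum_add_distrib, hBe, hBf]

theorem apply_sum_smul {μ : V → ZMod 2} (hμ : IsQuadraticRefinement b μ) (halt : b.IsAlt)
    (h : IsSymplecticBasis b g e f) (c : Fin g → ZMod 2 × ZMod 2) :
    μ (∑ i, ((c i).1 • e i + (c i).2 • f i)) =
      ∑ i, ((c i).1 * μ (e i) + (c i).2 * μ (f i) + (c i).1 * (c i).2) := by
  obtain ⟨hee, hff, hef, -⟩ := h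
  have hfe : ∀ i j, i ≠ j → b (f i) (e j) = 0 := fun i j hij =>
    halt.eq_iff.mp (by rw [hef, if_neg hij.symm])
  rw [hμ.map_sum_of_pairwise_orthogonal]
  · refine Finset.sum_congr rfl fun i _ => ?_
    simp only [hμ _ _, hμ.map_smul_zmod_two, map_smul, LinearMap.smul_apply, hef, ↓reduceIte,
      smul_eq_mul, mul_one]
    ring
  · intro i _ j _ hij
    simp [hee, hff, hef, hfe i j hij, hij]

theorem sum_signChar_eq [Fintype V] {μ : V → ZMod 2} (hμ : IsQuadraticRefinement b μ)
    (halt : b.IsAlt) (h : IsSymplecticBasis b g e f) :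
    ∑ v, signChar (μ v) = 2 ^ g * signChar (∑ i, μ (e i) * μ (f i)) := by
  calc ∑ v, signChar (μ v)
      = ∑ c : Fin g → ZMod 2 × ZMod 2, ∏ i,
          signChar ((c i).1 * μ (e i) + (c i).2 * μ (f i) + (c i).1 * (c i).2) := by
        rw [← h.bijective_sum_smul.sum_comp]
        simp only [h.apply_sum_smul hμ halt, AddChar.map_sum_eq_prod]
    _ = ∏ i, ∑ p : ZMod 2 × ZMod 2, signChar (p.1 * μ (e i) + p.2 * μ (f i) + p.1 * p.2) :=
        (Fintype.prod_sum fun i (p : ZMod 2 × ZMod 2) =>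
          signChar (p.1 * μ (e i) + p.2 * μ (f i) + p.1 * p.2)).symm
    _ = 2 ^ g * signChar (∑ i, μ (e i) * μ (f i)) := by
        simp only [sum_signChar_hyperbolic, Finset.prod_mul_distrib, AddChar.map_sum_eq_prod,
          Finset.prod_const, Finset.card_univ, Fintype.card_fin]

end IsSymplecticBasis

theorem arf_well_defined_general
    (V : Type*) [AddCommGroup V] [Module (ZMod 2) V]
    (b : V →ₗ[ZMod 2] V →ₗ[ZMod 2] ZMod 2)
    (halt : ∀ x, b x x = 0)
    (μ : V → ZMod 2)
    (hμ : ∀ x y, μ (x + y) = μ x + μ y + b x y)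
    (g g' : ℕ) (e f : Fin g → V) (e' f' : Fin g' → V)
    (h1 : IsSymplecticBasis b g e f) (h2 : IsSymplecticBasis b g' e' f') :
    ∑ i, μ (e i) * μ (f i) = ∑ i, μ (e' i) * μ (f' i) := by
  obtain ⟨-, -, -, B, -⟩ := id h1
  let : Fintype V := Module.fintypeOfFintype B
  obtain rfl : g = g' := by have := h1.finrank_eq; have := h2.finrank_eq; omega
  refine signChar_injective (mul_left_cancel₀ (pow_ne_zero g two_ne_zero) ?_)
  rw [← h1.sum_signChar_eq hμ halt, ← h2.sum_signChar_eq hμ halt]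

/-- **Well-definedness of the Arf invariant** (underlying Definition 5.4 of the paper).
Let `V` be a finite-dimensional `𝔽₂`-vector space with a nondegenerate alternating bilinear
form `b` and a quadratic refinement `μ` of `b`.  Then `∑ᵢ μ(eᵢ)μ(fᵢ) ∈ 𝔽₂` does not depend
on the choice of symplectic basis `{eᵢ, fᵢ}` of `V`. -/
theorem arf_well_defined
    (V : Type*) [AddCommGroup V] [Module (ZMod 2) V] [FiniteDimensional (ZMod 2) V]
    (b : V →ₗ[ZMod 2] V →ₗ[ZMod 2] ZMod 2)
    (halt : ∀ x, b x x = 0)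
    (hnd : Function.Injective fun x => b x)
    (μ : V → ZMod 2)
    (hμ : ∀ x y, μ (x + y) = μ x + μ y + b x y)
    (g g' : ℕ) (e f : Fin g → V) (e' f' : Fin g' → V)
    (h1 : IsSymplecticBasis b g e f) (h2 : IsSymplecticBasis b g' e' f') :
    ∑ i, μ (e i) * μ (f i) = ∑ i, μ (e' i) * μ (f' i) :=
  arf_well_defined_general V b halt μ hμ g g' e f e' f' h1 h2
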